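/- arXiv:2106.11807 — 3 statements merged into one kernel-verified Lean document; each statement's English description precedes it below -/
import Mathlib

section
/- Let F be a nonempty finite set (the faces of a mesh element E), let H : F → ℝ be a flux function, let τ > 0 (time step), φ > 0 (porosity), and m > 0 (the measure |E| of the element). Let s ∈ ℝ satisfy s_* ≤ s ≤ s^* and define P⁺ = τ·Σ_{e∈F} max(0, −H(e)), P⁻ = τ·Σ_{e∈F} min(0, −H(e)), Q⁺ = m·φ·(s^* − s), and Q⁻ = m·φ·(s_* − s). Suppose α : F → ℝ satisfies 0 ≤ α(e) ≤ 1 for every e ∈ F, and moreover α(e)·P⁺ ≤ Q⁺ whenever H(e) < 0, and α(e)·P⁻ ≥ Q⁻ whenever H(e) > 0. Then the flux-limited update s' = s − (τ/(φ·m))·Σ_{e∈F} α(e)·H(e) satisfies s_* ≤ s' ≤ s^*. -/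
/-!
Write `H e = H⁺ e - H⁻ e`. Since the limiters are nonnegative, the limited net flux
`τ ∑ α e H e` lies between `-τ ∑ α e H⁻ e` and `τ ∑ α e H⁺ e`, so it suffices to bound the limited
inflow by `Q⁺` and the limited outflow by `-Q⁻`. For the inflow, let `e₀` be the inflow face with
the largest limiter: then `τ ∑ α e H⁻ e ≤ α e₀ · τ ∑ H⁻ e = α e₀ P⁺ ≤ Q⁺`; the outflow is symmetric.
-/

open Finset

section LinearOrderedCommSemiring

variable {ι R : Type*} [Fintype ι] [CommSemiring R] [LinearOrder R] [IsOrderedRing R]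

theorem sum_mul_le_of_forall_pos_mul_sum_le {α w : ι → R} {Q : R}
    (hw : ∀ i, 0 ≤ w i) (hQ : 0 ≤ Q) (h : ∀ i, 0 < w i → α i * ∑ j, w j ≤ Q) :
    ∑ i, α i * w i ≤ Q := by
  rcases (univ.filter fun i => 0 < w i).eq_empty_or_nonempty with hempty | hsupp
  · have hzero : ∀ i, w i = 0 := fun i =>
      (hw i).antisymm' (not_lt.mp fun hi => (eq_empty_iff_forall_notMem.mp hempty) i (by simp [hi]))
    simpa [hzero] using hQ
  obtain ⟨i₀, hi₀, hmax⟩ := exists_max_image _ α hsupp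
  simp only [mem_filter, mem_univ, true_and] at hi₀ hmax
  calc ∑ i, α i * w i ≤ ∑ i, α i₀ * w i := by
        refine sum_le_sum fun i _ => ?_
        rcases (hw i).lt_or_eq with hi | hi
        · exact mul_le_mul_of_nonneg_right (hmax i hi) (hw i)
        · simp [← hi]
    _ = α i₀ * ∑ j, w j := (mul_sum _ _ _).symm
    _ ≤ Q := h i₀ hi₀

end LinearOrderedCommSemiring

section LinearOrderedCommRing

variable {ι R : Type*} [Fintype ι] [CommRing R] [LinearOrder R] [IsStrictOrderedRing R]

theorem neg_le_mul_sum_mul_of_limited_inflow {H α : ι → R} {τ Q : R}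
    (hτ : 0 ≤ τ) (hQ : 0 ≤ Q) (hα : ∀ i, 0 ≤ α i)
    (h : ∀ i, H i < 0 → α i * (τ * ∑ j, max 0 (-H j)) ≤ Q) :
    -Q ≤ τ * ∑ i, α i * H i := by
  have hinflow : ∑ i, α i * (τ * max 0 (-H i)) ≤ Q := by
    refine sum_mul_le_of_forall_pos_mul_sum_le (fun i => by positivity) hQ fun i hi => ?_
    rw [← mul_sum]
    refine h i (not_le.mp fun hH => ?_)
    simp [max_eq_left (neg_nonpos.mpr hH)] at hi
  calc -Q ≤ ∑ i, -(α i * (τ * max 0 (-H i))) := by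
        rw [sum_neg_distrib]; exact neg_le_neg hinflow
    _ ≤ ∑ i, α i * (τ * H i) := sum_le_sum fun i _ => by
        nlinarith [mul_nonneg (hα i) hτ, le_max_right 0 (-H i)]
    _ = τ * ∑ i, α i * H i := by simp only [mul_sum, mul_left_comm τ]

theorem mul_sum_mul_le_of_limited_outflow {H α : ι → R} {τ Q : R}
    (hτ : 0 ≤ τ) (hQ : 0 ≤ Q) (hα : ∀ i, 0 ≤ α i)
    (h : ∀ i, 0 < H i → -Q ≤ α i * (τ * ∑ j, min 0 (-H j))) :
    τ * ∑ i, α i * H i ≤ Q := by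
  have hinflow := neg_le_mul_sum_mul_of_limited_inflow (H := -H) hτ hQ hα fun i hi => by
    have hmin : ∀ x : R, min 0 (-x) = -max 0 x := fun x => by simpa using min_neg_neg (0 : R) x
    simpa [hmin, sum_neg_distrib] using neg_le_neg (h i (neg_neg_iff_pos.mp hi))
  simpa [mul_neg, sum_neg_distrib] using hinflow

end LinearOrderedCommRing

theorem flux_limited_update_bound_preserving_general
    {F : Type*} [Fintype F]
    (H : F → ℝ) (τ φ m sLo sHi s : ℝ)
    (hτ : 0 < τ) (hφ : 0 < φ) (hm : 0 < m)
    (hsLo : sLo ≤ s) (hsHi : s ≤ sHi)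
    (α : F → ℝ)
    (hα0 : ∀ e, 0 ≤ α e)
    (hPlus : ∀ e, H e < 0 →
      α e * (τ * ∑ e' : F, max 0 (-(H e'))) ≤ m * φ * (sHi - s))
    (hMinus : ∀ e, 0 < H e →
      m * φ * (sLo - s) ≤ α e * (τ * ∑ e' : F, min 0 (-(H e')))) :
    sLo ≤ s - (τ / (φ * m)) * ∑ e : F, α e * H e ∧
      s - (τ / (φ * m)) * ∑ e : F, α e * H e ≤ sHi := by
  have hmφ : 0 < m * φ := mul_pos hm hφ
  have hlower : -(m * φ * (sHi - s)) ≤ τ * ∑ e, α e * H e :=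
    neg_le_mul_sum_mul_of_limited_inflow hτ.le (by nlinarith) hα0 hPlus
  have hupper : τ * ∑ e, α e * H e ≤ m * φ * (s - sLo) :=
    mul_sum_mul_le_of_limited_outflow hτ.le (by nlinarith) hα0 fun e he => by
      linarith [hMinus e he]
  rw [div_mul_eq_mul_div, mul_comm φ m]
  constructor
  · linarith [(div_le_iff₀ hmφ).mpr (by linarith : τ * ∑ e, α e * H e ≤ (s - sLo) * (m * φ))]
  · linarith [(le_div_iff₀ hmφ).mpr (by linarith : -(sHi - s) * (m * φ) ≤ τ * ∑ e, α e * H e)]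

/-- One step of the flux limiter (no wells) is bound preserving. -/
theorem flux_limited_update_bound_preserving
    {F : Type*} [Fintype F] [Nonempty F]
    (H : F → ℝ) (τ φ m sLo sHi s : ℝ)
    (hτ : 0 < τ) (hφ : 0 < φ) (hm : 0 < m)
    (hsLo : sLo ≤ s) (hsHi : s ≤ sHi)
    (α : F → ℝ)
    (hα0 : ∀ e, 0 ≤ α e) (hα1 : ∀ e, α e ≤ 1)
    (hPlus : ∀ e, H e < 0 →
      α e * (τ * ∑ e' : F, max 0 (-(H e'))) ≤ m * φ * (sHi - s))
    (hMinus : ∀ e, 0 < H e →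
      m * φ * (sLo - s) ≤ α e * (τ * ∑ e' : F, min 0 (-(H e')))) :
    sLo ≤ s - (τ / (φ * m)) * ∑ e : F, α e * H e ∧
      s - (τ / (φ * m)) * ∑ e : F, α e * H e ≤ sHi :=
  flux_limited_update_bound_preserving_general H τ φ m sLo sHi s hτ hφ hm hsLo hsHi α hα0 hPlus
    hMinus
end

section
/- Let F be a nonempty finite set, τ > 0, φ > 0, m > 0, and s_* ≤ s^* real numbers. Let (s_k)_{k≥0} be a real sequence, (H_k)_{k≥0} a sequence of functions F → ℝ, and (α_k)_{k≥1} a sequence of functions F → ℝ such that for every k ≥ 1: (i) 0 ≤ α_k(e) ≤ 1 for all e ∈ F; (ii) setting P⁺_{k−1} = τ·Σ_{e∈F} max(0, −H_{k−1}(e)), P⁻_{k−1} = τ·Σ_{e∈F} min(0, −H_{k−1}(e)), Q⁺_{k−1} = m·φ·(s^* − s_{k−1}) and Q⁻_{k−1} = m·φ·(s_* − s_{k−1}), one has α_k(e)·P⁺_{k−1} ≤ Q⁺_{k−1} whenever H_{k−1}(e) < 0 and α_k(e)·P⁻_{k−1} ≥ Q⁻_{k−1} whenever H_{k−1}(e)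 > 0; and (iii) s_k = s_{k−1} − (τ/(φ·m))·Σ_{e∈F} α_k(e)·H_{k−1}(e). If s_* ≤ s_0 ≤ s^*, then s_* ≤ s_k ≤ s^* for every k ≥ 0. -/
/-!
Splitting each net flux `H e` into its outflow part `max 0 (H e)` and inflow part
`max 0 (-H e)`, one limited step changes the saturation by `(inflow - outflow) / (φ m)`, where
both flows are nonnegative. The limiter condition bounds each factor `α e` times the total
unlimited flow by the admissible bound `Q±` on every face that actually carries flow, so the
limited flow, a weighted combination of those factors, is also bounded by `Q±`. Hence neither
bound of `[sLo, sHi]` is crossed, and induction on `k` concludes.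
-/

open Finset

theorem mul_sum_mul_le_of_forall_pos_weight {K ι : Type*} [Field K] [LinearOrder K]
    [IsStrictOrderedRing K] {s : Finset ι} {c Q : K} {a g : ι → K} (hg : ∀ i ∈ s, 0 ≤ g i)
    (hQ : 0 ≤ Q) (h : ∀ i ∈ s, 0 < g i → a i * (c * ∑ j ∈ s, g j) ≤ Q) :
    c * ∑ i ∈ s, a i * g i ≤ Q := by
  rcases (sum_nonneg hg).eq_or_lt with hzero | hpos
  · have hg0 : ∀ i ∈ s, g i = 0 := (sum_eq_zero_iff_of_nonneg hg).mp hzero.symm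
    rw [sum_eq_zero fun i hi => by rw [hg0 i hi, mul_zero], mul_zero]
    exact hQ
  · have htermwise : ∀ i ∈ s, a i * (c * ∑ j ∈ s, g j) * g i ≤ Q * g i := by
      intro i hi
      rcases (hg i hi).eq_or_lt with hgi | hgi
      · simp [← hgi]
      · exact mul_le_mul_of_nonneg_right (h i hi hgi) hgi.le
    have hsum := sum_le_sum htermwise
    rw [← mul_sum] at hsum
    refine le_of_mul_le_mul_right ?_ hpos
    calc (c * ∑ i ∈ s, a i * g i) * ∑ j ∈ s, g j
        = ∑ i ∈ s, a i * (c * ∑ j ∈ s, g j) * g i := by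
          rw [mul_assoc, sum_mul, mul_sum]; exact sum_congr rfl fun i _ => by ring
      _ ≤ Q * ∑ j ∈ s, g j := hsum

theorem sum_min_zero_neg {ι G : Type*} [AddCommGroup G] [LinearOrder G]
    [IsOrderedAddMonoid G] (s : Finset ι) (f : ι → G) :
    ∑ i ∈ s, min 0 (-f i) = -∑ i ∈ s, max 0 (f i) := by
  rw [← sum_neg_distrib]
  exact sum_congr rfl fun i _ => by rw [← min_neg_neg, neg_zero]

theorem flux_limited_update_mem_Icc {F : Type*} [Fintype F] {τ φ m sLo sHi s₀ : ℝ}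
    {H α : F → ℝ} (hτ : 0 < τ) (hφ : 0 < φ) (hm : 0 < m) (hα : ∀ e, 0 ≤ α e)
    (hPlus : ∀ e, H e < 0 → α e * (τ * ∑ e', max 0 (-H e')) ≤ m * φ * (sHi - s₀))
    (hMinus : ∀ e, 0 < H e → m * φ * (sLo - s₀) ≤ α e * (τ * ∑ e', min 0 (-H e')))
    (hs₀ : s₀ ∈ Set.Icc sLo sHi) :
    s₀ - τ / (φ * m) * ∑ e, α e * H e ∈ Set.Icc sLo sHi := by
  have hmφ : 0 ≤ m * φ := (mul_pos hm hφ).le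
  set inflow := τ * ∑ e, α e * max 0 (-H e)
  set outflow := τ * ∑ e, α e * max 0 (H e)
  have hinflow : inflow ≤ m * φ * (sHi - s₀) :=
    mul_sum_mul_le_of_forall_pos_weight (fun e _ => le_max_left _ _)
      (mul_nonneg hmφ (sub_nonneg.mpr hs₀.2)) fun e _ he => hPlus e (by simpa using he)
  have houtflow : outflow ≤ m * φ * (s₀ - sLo) := by
    refine mul_sum_mul_le_of_forall_pos_weight (fun e _ => le_max_left _ _)
      (mul_nonneg hmφ (sub_nonneg.mpr hs₀.1)) fun e _ he => ?_
    have := hMinus e (by simpa using he)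
    rw [sum_min_zero_neg] at this
    linarith
  have hinflow_nonneg : 0 ≤ inflow :=
    mul_nonneg hτ.le (sum_nonneg fun e _ => mul_nonneg (hα e) (le_max_left _ _))
  have houtflow_nonneg : 0 ≤ outflow :=
    mul_nonneg hτ.le (sum_nonneg fun e _ => mul_nonneg (hα e) (le_max_left _ _))
  have hflux : τ * ∑ e, α e * H e = outflow - inflow := by
    simp only [outflow, inflow, ← mul_sub, ← sum_sub_distrib, ← mul_sub]
    congr 1
    refine sum_congr rfl fun e _ => ?_
    rw [max_comm 0, max_comm 0, max_zero_sub_max_neg_zero_eq_self]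
  have hφm : 0 < φ * m := mul_pos hφ hm
  have hstep : s₀ - τ / (φ * m) * ∑ e, α e * H e = s₀ + (inflow - outflow) / (φ * m) := by
    rw [div_mul_eq_mul_div, hflux]; ring
  rw [hstep, Set.mem_Icc]
  constructor
  · have : (sLo - s₀) * (φ * m) ≤ inflow - outflow := by linarith
    linarith [(le_div_iff₀ hφm).mpr this]
  · have : inflow - outflow ≤ (sHi - s₀) * (φ * m) := by linarith
    linarith [(div_le_iff₀ hφm).mpr this]

theorem flux_limiter_iterates_bound_preserving_general
    {F : Type*} [Fintype F]
    (τ φ m sLo sHi : ℝ)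
    (hτ : 0 < τ) (hφ : 0 < φ) (hm : 0 < m)
    (s : ℕ → ℝ) (H : ℕ → F → ℝ) (α : ℕ → F → ℝ)
    (hα0 : ∀ k, 1 ≤ k → ∀ e, 0 ≤ α k e)
    (hPlus : ∀ k, 1 ≤ k → ∀ e, H (k - 1) e < 0 →
      α k e * (τ * ∑ e' : F, max 0 (-(H (k - 1) e'))) ≤ m * φ * (sHi - s (k - 1)))
    (hMinus : ∀ k, 1 ≤ k → ∀ e, 0 < H (k - 1) e →
      m * φ * (sLo - s (k - 1)) ≤ α k e * (τ * ∑ e' : F, min 0 (-(H (k - 1) e'))))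
    (hupd : ∀ k, 1 ≤ k →
      s k = s (k - 1) - (τ / (φ * m)) * ∑ e : F, α k e * H (k - 1) e)
    (h0 : sLo ≤ s 0 ∧ s 0 ≤ sHi) :
    ∀ k, sLo ≤ s k ∧ s k ≤ sHi := by
  intro k
  induction k with
  | zero => exact h0
  | succ n ih =>
    have hk : 1 ≤ n + 1 := Nat.le_add_left 1 n
    rw [← Set.mem_Icc, hupd (n + 1) hk]
    exact flux_limited_update_mem_Icc hτ hφ hm (hα0 (n + 1) hk) (hPlus (n + 1) hk)
      (hMinus (n + 1) hk) ih

/-- Every iterate of the flux-limiter algorithm (no wells)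
stays in the physical interval `[sLo, sHi]`. -/
theorem flux_limiter_iterates_bound_preserving
    {F : Type*} [Fintype F] [Nonempty F]
    (τ φ m sLo sHi : ℝ)
    (hτ : 0 < τ) (hφ : 0 < φ) (hm : 0 < m) (hbounds : sLo ≤ sHi)
    (s : ℕ → ℝ) (H : ℕ → F → ℝ) (α : ℕ → F → ℝ)
    (hα0 : ∀ k, 1 ≤ k → ∀ e, 0 ≤ α k e)
    (hα1 : ∀ k, 1 ≤ k → ∀ e, α k e ≤ 1)
    (hPlus : ∀ k, 1 ≤ k → ∀ e, H (k - 1) e < 0 →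
      α k e * (τ * ∑ e' : F, max 0 (-(H (k - 1) e'))) ≤ m * φ * (sHi - s (k - 1)))
    (hMinus : ∀ k, 1 ≤ k → ∀ e, 0 < H (k - 1) e →
      m * φ * (sLo - s (k - 1)) ≤ α k e * (τ * ∑ e' : F, min 0 (-(H (k - 1) e'))))
    (hupd : ∀ k, 1 ≤ k →
      s k = s (k - 1) - (τ / (φ * m)) * ∑ e : F, α k e * H (k - 1) e)
    (h0 : sLo ≤ s 0 ∧ s 0 ≤ sHi) :
    ∀ k, sLo ≤ s k ∧ s k ≤ sHi :=
  flux_limiter_iterates_bound_preserving_general τ φ m sLo sHi hτ hφ hm s H α hα0 hPlus hMinus hupd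
    h0
end

section
/- Let n ≥ 1 and, for each i ∈ {0,…,n−1}, let u_i ∈ ℝ (the unlimited values of a linear reconstruction at the vertices of a mesh element), and let m_i, M_i ∈ ℝ be local bounds satisfying m_i ≤ S̄ ≤ M_i, where S̄ ∈ ℝ is the cell average. For each i define β_i = (M_i − S̄)/(u_i − S̄) if u_i > M_i, β_i = 1 if m_i ≤ u_i ≤ M_i, and β_i = (m_i − S̄)/(u_i − S̄) if u_i < m_i; and set β = min_i β_i. Then 0 ≤ β ≤ 1 and for every i, m_i ≤ S̄ + β·(u_i − S̄) ≤ M_i. -/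
/-!
Scaling the deviation `u - S̄` by `b ∈ [0, 1]` moves the vertex value along the segment from `S̄`
towards `u`; the vertex factor `β_i` is the largest such `b` keeping vertex `i` inside `[m_i, M_i]`,
and every smaller `b ≥ 0` keeps it there too. The minimum of the `β_i` is therefore admissible at
every vertex simultaneously.
-/

variable {K : Type*} [Field K] [LinearOrder K] [IsStrictOrderedRing K]

def limiterFactor (m M S u : K) : K :=
  if M < u then (M - S) / (u - S) else if u < m then (m - S) / (u - S) else 1

theorem limiterFactor_mem_Icc {m M S : K} (u : K) (hm : m ≤ S) (hM : S ≤ M) :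
    limiterFactor m M S u ∈ Set.Icc 0 1 := by
  unfold limiterFactor
  split_ifs with hMu hum
  · have hd : 0 < u - S := by linarith
    exact ⟨div_nonneg (by linarith) hd.le, (div_le_one hd).2 (by linarith)⟩
  · have hd : u - S < 0 := by linarith
    exact ⟨div_nonneg_of_nonpos (by linarith) hd.le, (div_le_one_of_neg hd).2 (by linarith)⟩
  · exact ⟨zero_le_one, le_rfl⟩

theorem add_mul_sub_mem_Icc_of_le_limiterFactor {m M S u b : K} (hm : m ≤ S) (hM : S ≤ M)
    (hb₀ : 0 ≤ b) (hb : b ≤ limiterFactor m M S u) : S + b * (u - S) ∈ Set.Icc m M := by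
  unfold limiterFactor at hb
  split_ifs at hb with hMu hum
  · have hd : 0 < u - S := by linarith
    have hupper : b * (u - S) ≤ M - S := (le_div_iff₀ hd).1 hb
    have hlower : 0 ≤ b * (u - S) := mul_nonneg hb₀ hd.le
    constructor <;> linarith
  · have hd : u - S < 0 := by linarith
    have hlower : m - S ≤ b * (u - S) := (le_div_iff_of_neg hd).1 hb
    have hupper : b * (u - S) ≤ 0 := mul_nonpos_of_nonneg_of_nonpos hb₀ hd.le
    constructor <;> linarith
  · have hmu : m ≤ u := not_lt.1 hum
    have huM : u ≤ M := not_lt.1 hMu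
    -- `S + b (u - S) = (1 - b) S + b u` is a convex combination of two points of `[m, M]`
    constructor
    · linarith [mul_le_mul_of_nonneg_left hmu hb₀, mul_le_mul_of_nonneg_left hm (sub_nonneg.2 hb)]
    · linarith [mul_le_mul_of_nonneg_left huM hb₀, mul_le_mul_of_nonneg_left hM (sub_nonneg.2 hb)]

/-- The vertex-based slope limiter correction factor lies in
`[0,1]` and enforces the local bounds at all vertices. -/
theorem vertex_slope_limiter_bounds
    (n : ℕ) (hn : 1 ≤ n) (u mLo MHi : Fin n → ℝ) (Sbar : ℝ)
    (hLo : ∀ i, mLo i ≤ Sbar) (hHi : ∀ i, Sbar ≤ MHi i)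
    (βv : Fin n → ℝ)
    (hβv : ∀ i, βv i =
      if MHi i < u i then (MHi i - Sbar) / (u i - Sbar)
      else if u i < mLo i then (mLo i - Sbar) / (u i - Sbar)
      else 1)
    (β : ℝ)
    (hβ : β = Finset.univ.inf' ⟨⟨0, hn⟩, Finset.mem_univ _⟩ βv) :
    (0 ≤ β ∧ β ≤ 1) ∧
      ∀ i, mLo i ≤ Sbar + β * (u i - Sbar) ∧ Sbar + β * (u i - Sbar) ≤ MHi i := by
  have hβv_mem : ∀ i, βv i ∈ Set.Icc 0 1 := fun i =>
    (hβv i).symm ▸ limiterFactor_mem_Icc (u i) (hLo i) (hHi i)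
  have hβ_le : ∀ i, β ≤ βv i := fun i => hβ ▸ Finset.inf'_le _ (Finset.mem_univ i)
  have hβ_nonneg : 0 ≤ β := hβ ▸ Finset.le_inf' _ _ fun i _ => (hβv_mem i).1
  have hβ_le_one : β ≤ 1 := (hβ_le ⟨0, hn⟩).trans (hβv_mem ⟨0, hn⟩).2
  exact ⟨⟨hβ_nonneg, hβ_le_one⟩, fun i =>
    add_mul_sub_mem_Icc_of_le_limiterFactor (hLo i) (hHi i) hβ_nonneg ((hβ_le i).trans_eq (hβv i))⟩
end
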